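/- arXiv:1406.2052 — 2 statements merged into one kernel-verified Lean document; each statement's English description precedes it below -/
import Mathlib

section
/- Let Q be a locally point symmetric convex polytope in ℝ^D with vertices in ℤ^D, and let A ⊆ L(Q). For a pair of strictly antipodal vertices v₁ and v₂ of Q, let E₁ and E₂ be parallel edges of Q with v₁ ∈ E₁ and v₂ ∈ E₂. Suppose A ∩ E₁ = T₁(S₁) and A ∩ E₂ = T₂(S₂), where S₁, S₂ ⊆ ℤ and T₁, T₂ : ℝ → ℝ^D are injective affine transformations with the same associated linear transformation. Then there exists an injective affine transformation T : ℝ → ℝ^D such that (A−A) ∩ (E₂−E₁) = T(S₂−S₁). -/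
open scoped Pointwise

noncomputable section

/-- Points of `ℝ^D` with the Euclidean metric. -/
abbrev Pt (D : ℕ) := EuclideanSpace ℝ (Fin D)

/-- `L(S)`: the set of lattice points of `S`, i.e. points of `S` all of whose
coordinates are integers. -/
def latticePts {D : ℕ} (S : Set (Pt D)) : Set (Pt D) :=
  {x | x ∈ S ∧ ∀ i, ∃ z : ℤ, x i = (z : ℝ)}

/-- A convex polytope: the convex hull of a finite set of points. -/
def IsPolytope {D : ℕ} (P : Set (Pt D)) : Prop :=
  ∃ V : Set (Pt D), V.Finite ∧ P = convexHull ℝ V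

/-- A convex polytope whose vertices (extreme points) all lie in `ℤ^D`. -/
def IsLatticePolytope {D : ℕ} (P : Set (Pt D)) : Prop :=
  IsPolytope P ∧ ∀ v ∈ Set.extremePoints ℝ P, ∀ i, ∃ z : ℤ, v i = (z : ℝ)

/-- `u` and `v` are strictly antipodal vertices of `Q`: there are parallel supporting
hyperplanes `H₁, H₂` of `Q` (with common normal functional `f`) such that
`H₁ ∩ Q = {u}` and `H₂ ∩ Q = {v}`. -/
def StrictlyAntipodal {D : ℕ} (Q : Set (Pt D)) (u v : Pt D) : Prop :=
  ∃ f : Pt D →ₗ[ℝ] ℝ, f ≠ 0 ∧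
    {x | x ∈ Q ∧ ∀ y ∈ Q, f y ≤ f x} = {u} ∧
    {x | x ∈ Q ∧ ∀ y ∈ Q, f x ≤ f y} = {v}

/-- The supporting cone of `Q` at `v`: `v + ⋃_{λ ≥ 0} λ (Q - v)`. -/
def suppCone {D : ℕ} (Q : Set (Pt D)) (v : Pt D) : Set (Pt D) :=
  {v} + ⋃ (l : ℝ) (_ : 0 ≤ l), l • (Q - ({v} : Set (Pt D)))

/-- `Q` is locally point symmetric: its vertices can be partitioned into pairs
(given by a fixed-point-free involution `σ` of the vertex set) of strictly antipodal
vertices such that each pair `{u, v}` satisfies `C(u) - u = v - C(v)`. -/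
def LocallyPointSymmetric {D : ℕ} (Q : Set (Pt D)) : Prop :=
  ∃ σ : Pt D → Pt D, ∀ v ∈ Set.extremePoints ℝ Q,
    σ v ∈ Set.extremePoints ℝ Q ∧ σ v ≠ v ∧ σ (σ v) = v ∧
    StrictlyAntipodal Q v (σ v) ∧
    suppCone Q v - ({v} : Set (Pt D)) = ({σ v} : Set (Pt D)) - suppCone Q (σ v)

/-- `E` is an edge of `Q`: a 1-dimensional face, i.e. the intersection of `Q` with a
supporting hyperplane which is 1-dimensional. -/
def IsEdge {D : ℕ} (Q E : Set (Pt D)) : Prop :=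
  (∃ f : Pt D →ₗ[ℝ] ℝ, f ≠ 0 ∧ E = {x | x ∈ Q ∧ ∀ y ∈ Q, f y ≤ f x}) ∧
    Module.finrank ℝ (affineSpan ℝ E).direction = 1

/-- `B_r(Q)`: lattice points of `Q` within distance `r` of some vertex of `Q`. -/
def ballFringe {D : ℕ} (Q : Set (Pt D)) (r : ℝ) : Set (Pt D) :=
  {q | q ∈ latticePts Q ∧ ∃ v ∈ Set.extremePoints ℝ Q, dist q v ≤ r}

/-- `M_r(Q) = L(Q) \ B_r(Q)`: the middle lattice points of `Q`. -/
def middlePts {D : ℕ} (Q : Set (Pt D)) (r : ℝ) : Set (Pt D) :=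
  latticePts Q \ ballFringe Q r

/-- `P` is point symmetric: `P = x - P` for some point `x`. -/
def PointSymmetric {D : ℕ} (P : Set (Pt D)) : Prop :=
  ∃ x : Pt D, P = ({x} : Set (Pt D)) - P

/-!
Write `g` for the functional exposing the edge `E₂`, so `g` is maximal on `Q` exactly along `E₂`.
Local point symmetry at `v₂` says that `v₁ - Q` lies in the cone spanned by `Q - v₂`; hence `g` is
minimal on `Q` at `v₁`, and every minimiser `x` has `v₁ - x` parallel to `E₂`, hence to `E₁`, so
the minimal slice of `g` is exactly `E₁`. Thus `Q` lies in a slab whose two boundary slices are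
`E₁` and `E₂`, and a difference `a - a'` of points of `Q` lies in `E₂ - E₁` only if `a ∈ E₂` and
`a' ∈ E₁`. Therefore `(A - A) ∩ (E₂ - E₁) = (A ∩ E₂) - (A ∩ E₁) = T₂(S₂) - T₁(S₁)`, and since
`T₁, T₂` share their linear part this is the image of `S₂ - S₁` under `x ↦ T₂ x - T₁ 0`.
-/

section AffineImage

variable {k V₁ V₂ : Type*} [Ring k] [AddCommGroup V₁] [Module k V₁] [AddCommGroup V₂]
  [Module k V₂]

theorem AffineMap.sub_apply_eq_of_linear_eq {T₁ T₂ : V₁ →ᵃ[k] V₂} (hlin : T₁.linear = T₂.linear)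
    (x y : V₁) : T₂ x - T₁ y = (T₂ - AffineMap.const k V₁ (T₁ 0)) (x - y) := by
  have h₁ := T₁.decomp
  have h₂ := T₂.decomp
  simp only [hlin] at h₁
  simp only [AffineMap.coe_sub, AffineMap.coe_const, Pi.sub_apply, Function.const_apply]
  rw [h₁, h₂]
  simp only [Pi.add_apply, map_sub, map_zero, zero_add]
  abel

theorem AffineMap.image_sub_image_of_linear_eq {T₁ T₂ : V₁ →ᵃ[k] V₂}
    (hlin : T₁.linear = T₂.linear) (S₁ S₂ : Set V₁) :
    T₂ '' S₂ - T₁ '' S₁ = (T₂ - AffineMap.const k V₁ (T₁ 0)) '' (S₂ - S₁) := by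
  rw [← Set.image2_sub, ← Set.image2_sub, Set.image_image2_distrib]
  exact fun x y => (sub_apply_eq_of_linear_eq hlin x y).symm

end AffineImage

section Faces

theorem sub_mem_direction_affineSpan (k : Type*) {V : Type*} [Ring k] [AddCommGroup V] [Module k V]
    {F : Set V} {x y : V} (hx : x ∈ F) (hy : y ∈ F) : x - y ∈ (affineSpan k F).direction := by
  rw [direction_affineSpan]
  exact vsub_mem_vectorSpan k hx hy

variable {𝕜 E : Type*} [Field 𝕜] [LinearOrder 𝕜] [AddCommGroup E] [Module 𝕜 E]

def maxFace (Q : Set E) (f : E →ₗ[𝕜] 𝕜) : Set E :=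
  {x | x ∈ Q ∧ ∀ y ∈ Q, f y ≤ f x}

theorem maxFace_eq_setOf_map_eq {Q : Set E} {f : E →ₗ[𝕜] 𝕜} {v : E} (hv : v ∈ maxFace Q f) :
    maxFace Q f = {x | x ∈ Q ∧ f x = f v} := by
  ext x
  exact ⟨fun hx => ⟨hx.1, le_antisymm (hv.2 x hx.1) (hx.2 v hv.1)⟩,
    fun hx => ⟨hx.1, fun y hy => hx.2 ▸ hv.2 y hy⟩⟩

theorem map_eq_of_sub_mem_direction_maxFace {Q : Set E} {f : E →ₗ[𝕜] 𝕜} {x y : E}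
    (h : x - y ∈ (affineSpan 𝕜 (maxFace Q f)).direction) : f x = f y := by
  have hker : (affineSpan 𝕜 (maxFace Q f)).direction ≤ LinearMap.ker f := by
    rw [direction_affineSpan, vectorSpan_def, Submodule.span_le]
    rintro _ ⟨a, ha, b, hb, rfl⟩
    simp [le_antisymm (hb.2 a ha.1) (ha.2 b hb.1)]
  rw [← sub_eq_zero, ← map_sub]
  exact hker h

variable {Q : Set E} {v w : E}

theorem map_le_of_sub_mem_cone [IsStrictOrderedRing 𝕜]
    (hcone : ∀ x ∈ Q, ∃ l : 𝕜, 0 ≤ l ∧ ∃ q ∈ Q, w - x = l • (q - v))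
    {g : E →ₗ[𝕜] 𝕜} (hv : v ∈ maxFace Q g) {x : E} (hx : x ∈ Q) : g w ≤ g x := by
  obtain ⟨l, hl, q, hq, hwx⟩ := hcone x hx
  have hg : g w - g x = l * (g q - g v) := by
    simpa only [map_sub, map_smul, smul_eq_mul] using congrArg g hwx
  nlinarith [hv.2 q hq]

theorem sub_mem_direction_of_sub_mem_cone
    (hcone : ∀ x ∈ Q, ∃ l : 𝕜, 0 ≤ l ∧ ∃ q ∈ Q, w - x = l • (q - v))
    {g : E →ₗ[𝕜] 𝕜} (hv : v ∈ maxFace Q g) {x : E} (hx : x ∈ Q) (hgx : g x = g w) :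
    w - x ∈ (affineSpan 𝕜 (maxFace Q g)).direction := by
  obtain ⟨l, -, q, hq, hwx⟩ := hcone x hx
  have hg : l * (g q - g v) = 0 := by
    simpa only [map_sub, map_smul, smul_eq_mul, hgx, sub_self, eq_comm] using congrArg g hwx
  rw [hwx]
  rcases mul_eq_zero.mp hg with rfl | hgq
  · rw [zero_smul]
    exact Submodule.zero_mem _
  · have hqv : q ∈ maxFace Q g := by
      rw [maxFace_eq_setOf_map_eq hv]
      exact ⟨hq, sub_eq_zero.mp hgq⟩
    exact Submodule.smul_mem _ l (sub_mem_direction_affineSpan 𝕜 hqv hv)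

theorem maxFace_eq_setOf_map_eq_of_sub_mem_cone
    (hcone : ∀ x ∈ Q, ∃ l : 𝕜, 0 ≤ l ∧ ∃ q ∈ Q, w - x = l • (q - v))
    {g₁ g : E →ₗ[𝕜] 𝕜} (hw : w ∈ maxFace Q g₁) (hv : v ∈ maxFace Q g)
    (hpar : (affineSpan 𝕜 (maxFace Q g₁)).direction = (affineSpan 𝕜 (maxFace Q g)).direction) :
    maxFace Q g₁ = {x | x ∈ Q ∧ g x = g w} := by
  ext x
  constructor
  · intro hx
    have hxw := sub_mem_direction_affineSpan 𝕜 hx hw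
    rw [hpar] at hxw
    exact ⟨hx.1, map_eq_of_sub_mem_direction_maxFace hxw⟩
  · rintro ⟨hxQ, hgx⟩
    have hwx := sub_mem_direction_of_sub_mem_cone hcone hv hxQ hgx
    rw [← hpar] at hwx
    rw [maxFace_eq_setOf_map_eq hw]
    exact ⟨hxQ, (map_eq_of_sub_mem_direction_maxFace hwx).symm⟩

end Faces

theorem sub_inter_sub_eq_of_slab {E : Type*} [AddCommGroup E] {Q A F₁ F₂ : Set E} (g : E →+ ℝ)
    {m M : ℝ} (hA : A ⊆ Q) (hm : ∀ x ∈ Q, m ≤ g x) (hM : ∀ x ∈ Q, g x ≤ M)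
    (hF₁ : F₁ = {x | x ∈ Q ∧ g x = m}) (hF₂ : F₂ = {x | x ∈ Q ∧ g x = M}) :
    (A - A) ∩ (F₂ - F₁) = A ∩ F₂ - A ∩ F₁ := by
  apply subset_antisymm
  · rintro _ ⟨⟨a, ha, a', ha', rfl⟩, ⟨e₂, he₂, e₁, he₁, he⟩⟩
    simp only at he
    rw [hF₁] at he₁ ⊢
    rw [hF₂] at he₂ ⊢
    have hg : g a - g a' = M - m := by rw [← map_sub, ← he, map_sub, he₂.2, he₁.2]
    have ha_le := hM a (hA ha)
    have ha'_ge := hm a' (hA ha')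
    exact ⟨a, ⟨ha, hA ha, by linarith⟩, a', ⟨ha', hA ha', by linarith⟩, rfl⟩
  · rintro _ ⟨a, ha, a', ha', rfl⟩
    exact ⟨Set.sub_mem_sub ha.1 ha'.1, Set.sub_mem_sub ha.2 ha'.2⟩

theorem mem_suppCone_iff {D : ℕ} {Q : Set (Pt D)} {v x : Pt D} :
    x ∈ suppCone Q v ↔ ∃ l : ℝ, 0 ≤ l ∧ ∃ q ∈ Q, x = v + l • (q - v) := by
  simp only [suppCone, Set.mem_add, Set.mem_singleton_iff, Set.mem_iUnion,
    Set.mem_smul_set, Set.mem_sub]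
  constructor
  · rintro ⟨a, rfl, y, ⟨l, hl, z, ⟨q, hq, w, rfl, rfl⟩, rfl⟩, rfl⟩
    exact ⟨l, hl, q, hq, rfl⟩
  · rintro ⟨l, hl, q, hq, rfl⟩
    exact ⟨v, rfl, l • (q - v), ⟨l, hl, q - v, ⟨q, hq, v, rfl, rfl⟩, rfl⟩, rfl⟩

theorem subset_suppCone {D : ℕ} (Q : Set (Pt D)) (v : Pt D) : Q ⊆ suppCone Q v :=
  fun x hx => mem_suppCone_iff.mpr ⟨1, zero_le_one, x, hx, by simp⟩

theorem sub_mem_cone_of_suppCone_sub_eq {D : ℕ} {Q : Set (Pt D)} {v w : Pt D}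
    (hcone : suppCone Q v - {v} = {w} - suppCone Q w) {x : Pt D} (hx : x ∈ Q) :
    ∃ l : ℝ, 0 ≤ l ∧ ∃ q ∈ Q, w - x = l • (q - v) := by
  have hwx : w - x ∈ suppCone Q v - {v} :=
    hcone ▸ Set.sub_mem_sub rfl (subset_suppCone Q w hx)
  obtain ⟨y, hy, _, rfl, hy'⟩ := hwx
  obtain ⟨l, hl, q, hq, rfl⟩ := mem_suppCone_iff.mp hy
  exact ⟨l, hl, q, hq, by simp only at hy'; rw [← hy', add_sub_cancel_left]⟩

theorem StrictlyAntipodal.eq_of_sub_mem_cone {D : ℕ} {Q : Set (Pt D)} {u v w : Pt D}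
    (hanti : StrictlyAntipodal Q u v)
    (hcone : ∀ x ∈ Q, ∃ l : ℝ, 0 ≤ l ∧ ∃ q ∈ Q, w - x = l • (q - v)) (hw : w ∈ Q) :
    w = u := by
  obtain ⟨f, -, hmax, hmin⟩ := hanti
  have hv : v ∈ maxFace Q (-f) := by
    have hv : v ∈ {x | x ∈ Q ∧ ∀ y ∈ Q, f x ≤ f y} := hmin ▸ rfl
    exact ⟨hv.1, fun y hy => neg_le_neg (hv.2 y hy)⟩
  have hwu : w ∈ {x | x ∈ Q ∧ ∀ y ∈ Q, f y ≤ f x} :=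
    ⟨hw, fun y hy => neg_le_neg_iff.mp (map_le_of_sub_mem_cone hcone hv hy)⟩
  rwa [hmax] at hwu

theorem LocallyPointSymmetric.sub_mem_cone_of_strictlyAntipodal {D : ℕ} {Q : Set (Pt D)}
    (hQ : LocallyPointSymmetric Q) {u v : Pt D} (hv : v ∈ Set.extremePoints ℝ Q)
    (hanti : StrictlyAntipodal Q u v) :
    ∀ x ∈ Q, ∃ l : ℝ, 0 ≤ l ∧ ∃ q ∈ Q, u - x = l • (q - v) := by
  obtain ⟨σ, hσ⟩ := hQ
  obtain ⟨hσv, -, -, -, hcone⟩ := hσ v hv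
  have hσu : σ v = u :=
    hanti.eq_of_sub_mem_cone (fun x hx => sub_mem_cone_of_suppCone_sub_eq hcone hx) hσv.1
  exact hσu ▸ fun x hx => sub_mem_cone_of_suppCone_sub_eq hcone hx

theorem stmt7_general {D : ℕ} (Q : Set (Pt D))
    (hlps : LocallyPointSymmetric Q) (A : Set (Pt D)) (hA : A ⊆ latticePts Q)
    (v₁ v₂ : Pt D) (hv₂ : v₂ ∈ Set.extremePoints ℝ Q)
    (hanti : StrictlyAntipodal Q v₁ v₂)
    (E₁ E₂ : Set (Pt D)) (hE₁ : IsEdge Q E₁) (hE₂ : IsEdge Q E₂)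
    (hpar : (affineSpan ℝ E₁).direction = (affineSpan ℝ E₂).direction)
    (hv₁E : v₁ ∈ E₁) (hv₂E : v₂ ∈ E₂)
    (S₁ S₂ : Set ℤ) (T₁ T₂ : ℝ →ᵃ[ℝ] Pt D)
    (hT₂ : Function.Injective T₂)
    (hlin : T₁.linear = T₂.linear)
    (hAE₁ : A ∩ E₁ = ⇑T₁ '' ((fun z : ℤ => (z : ℝ)) '' S₁))
    (hAE₂ : A ∩ E₂ = ⇑T₂ '' ((fun z : ℤ => (z : ℝ)) '' S₂)) :
    ∃ T : ℝ →ᵃ[ℝ] Pt D, Function.Injective T ∧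
      (A - A) ∩ (E₂ - E₁) = ⇑T '' ((fun z : ℤ => (z : ℝ)) '' (S₂ - S₁)) := by
  have hcone := hlps.sub_mem_cone_of_strictlyAntipodal hv₂ hanti
  obtain ⟨⟨g₁, -, hE₁⟩, -⟩ := hE₁
  obtain ⟨⟨g, -, hE₂⟩, -⟩ := hE₂
  replace hE₁ : E₁ = maxFace Q g₁ := hE₁
  replace hE₂ : E₂ = maxFace Q g := hE₂
  subst hE₁ hE₂
  have hslab : (A - A) ∩ (maxFace Q g - maxFace Q g₁) = A ∩ maxFace Q g - A ∩ maxFace Q g₁ :=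
    sub_inter_sub_eq_of_slab g.toAddMonoidHom (fun x hx => (hA hx).1)
      (fun x hx => map_le_of_sub_mem_cone hcone hv₂E hx) hv₂E.2
      (maxFace_eq_setOf_map_eq_of_sub_mem_cone hcone hv₁E hv₂E hpar)
      (maxFace_eq_setOf_map_eq hv₂E)
  refine ⟨T₂ - AffineMap.const ℝ ℝ (T₁ 0), sub_left_injective.comp hT₂, ?_⟩
  rw [hslab, hAE₁, hAE₂, AffineMap.image_sub_image_of_linear_eq hlin]
  congr 1
  exact (Set.image_sub (Int.castAddHom ℝ)).symm

/-- Let `Q` be a locally point symmetric lattice polytope, `A ⊆ L(Q)`,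
`v₁, v₂` strictly antipodal vertices lying on parallel edges `E₁, E₂`, and suppose
`A ∩ E₁ = T₁(S₁)`, `A ∩ E₂ = T₂(S₂)` with `T₁, T₂` injective affine maps sharing the
same linear part. Then `(A - A) ∩ (E₂ - E₁) = T(S₂ - S₁)` for some injective affine
map `T`. -/
theorem stmt7 {D : ℕ} (Q : Set (Pt D)) (hQ : IsLatticePolytope Q)
    (hlps : LocallyPointSymmetric Q) (A : Set (Pt D)) (hA : A ⊆ latticePts Q)
    (v₁ v₂ : Pt D) (hv₁ : v₁ ∈ Set.extremePoints ℝ Q) (hv₂ : v₂ ∈ Set.extremePoints ℝ Q)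
    (hanti : StrictlyAntipodal Q v₁ v₂)
    (E₁ E₂ : Set (Pt D)) (hE₁ : IsEdge Q E₁) (hE₂ : IsEdge Q E₂)
    (hpar : (affineSpan ℝ E₁).direction = (affineSpan ℝ E₂).direction)
    (hv₁E : v₁ ∈ E₁) (hv₂E : v₂ ∈ E₂)
    (S₁ S₂ : Set ℤ) (T₁ T₂ : ℝ →ᵃ[ℝ] Pt D)
    (hT₁ : Function.Injective T₁) (hT₂ : Function.Injective T₂)
    (hlin : T₁.linear = T₂.linear)
    (hAE₁ : A ∩ E₁ = ⇑T₁ '' ((fun z : ℤ => (z : ℝ)) '' S₁))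
    (hAE₂ : A ∩ E₂ = ⇑T₂ '' ((fun z : ℤ => (z : ℝ)) '' S₂)) :
    ∃ T : ℝ →ᵃ[ℝ] Pt D, Function.Injective T ∧
      (A - A) ∩ (E₂ - E₁) = ⇑T '' ((fun z : ℤ => (z : ℝ)) '' (S₂ - S₁)) :=
  stmt7_general Q hlps A hA v₁ v₂ hv₂ hanti E₁ E₂ hE₁ hE₂ hpar hv₁E hv₂E S₁ S₂ T₁ T₂ hT₂ hlin hAE₁
    hAE₂
end
end

section
/- Let P be a convex polytope in ℝ^D with vertices in ℤ^D and let a > 0 be a constant. Then there exists a constant t > 0 such that for all n ≥ 2, every point k ∈ L(nP + nP) with |L(nP ∩ (k − nP))| ≤ a · log n lies within Euclidean distance t · log n of some vertex of the polytope nP + nP. -/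
open scoped Pointwise

noncomputable section

/-!
Write `k ∈ 2nP` as `2n ∑ θ_w w` over the vertices `w` of `P` and let `u` be a vertex of largest
weight. For another vertex `v`, round the weights `nθ` down, put the rounding deficit (at most the
number `m` of vertices) on `u`, and move `j` units of weight from `u` to `v`: for every integer
`j ∈ [m, nθ_v]` this gives a lattice point `x` with `x, k - x ∈ nP`, distinct for distinct `j`.
Hence `nθ_v ≤ |L(nP ∩ (k - nP))| + m ≤ a log n + m` for every `v ≠ u`, and the distance from `k` to
the vertex `2nu`, namely `‖2n ∑ θ_v (v - u)‖`, is `O(log n)`.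
-/

open Finset

abbrev intLattice (D : ℕ) : Submodule ℤ (Pt D) :=
  Submodule.span ℤ (Set.range (EuclideanSpace.basisFun (Fin D) ℝ).toBasis)

lemma mem_intLattice_iff {D : ℕ} {x : Pt D} : x ∈ intLattice D ↔ ∀ i, ∃ z : ℤ, x i = z := by
  simp [Module.Basis.mem_span_iff_repr_mem, eq_comm]

lemma latticePts_eq_inter {D : ℕ} (S : Set (Pt D)) : latticePts S = S ∩ intLattice D := by
  ext x
  simp [latticePts, mem_intLattice_iff]

lemma Bornology.IsBounded.latticePts_finite {D : ℕ} {S : Set (Pt D)}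
    (hS : Bornology.IsBounded S) : (latticePts S).Finite := by
  rw [latticePts_eq_inter]
  exact ZSpan.setFinite_inter _ hS

section Convex

variable {𝕜 E : Type*} [Field 𝕜] [LinearOrder 𝕜] [IsStrictOrderedRing 𝕜] [AddCommGroup E]
  [Module 𝕜 E]

lemma sum_smul_mem_smul_convexHull (s : Finset E) {w : E → 𝕜} {c : 𝕜} (hc : 0 < c)
    (hw₀ : ∀ x ∈ s, 0 ≤ w x) (hw : ∑ x ∈ s, w x = c) :
    ∑ x ∈ s, w x • x ∈ c • convexHull 𝕜 (s : Set E) := by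
  have h := s.centerMass_id_mem_convexHull hw₀ (hw ▸ hc)
  rw [centerMass, hw] at h
  simpa [smul_inv_smul₀ hc.ne'] using Set.smul_mem_smul_set (a := c) h

lemma extremePoints_smul (s : Set E) {c : 𝕜} (hc : c ≠ 0) :
    Set.extremePoints 𝕜 (c • s) = c • Set.extremePoints 𝕜 s := by
  simpa [Set.image_smul] using (image_extremePoints (LinearEquiv.smulOfNeZero 𝕜 E c hc) s).symm

end Convex

lemma IsPolytope.finite_extremePoints {D : ℕ} {P : Set (Pt D)} (hP : IsPolytope P) :
    (Set.extremePoints ℝ P).Finite := by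
  obtain ⟨V, hV, rfl⟩ := hP
  exact hV.subset extremePoints_convexHull_subset

lemma IsPolytope.convexHull_extremePoints {D : ℕ} {P : Set (Pt D)} (hP : IsPolytope P) :
    convexHull ℝ (Set.extremePoints ℝ P) = P := by
  have hclosed := (hP.finite_extremePoints.isCompact_convexHull ℝ).isClosed
  obtain ⟨V, hV, rfl⟩ := hP
  rw [← hclosed.closure_eq]
  exact closure_convexHull_extremePoints (hV.isCompact_convexHull ℝ) (convex_convexHull ℝ V)

lemma IsLatticePolytope.exists_finset_extremePoints {D : ℕ} {P : Set (Pt D)}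
    (hP : IsLatticePolytope P) :
    ∃ W : Finset (Pt D), ↑W = Set.extremePoints ℝ P ∧ P = convexHull ℝ ↑W ∧
      ∀ w ∈ W, w ∈ intLattice D := by
  obtain ⟨hPoly, hPZ⟩ := hP
  refine ⟨_, hPoly.finite_extremePoints.coe_toFinset, ?_, fun w hw => ?_⟩
  · rw [hPoly.finite_extremePoints.coe_toFinset, hPoly.convexHull_extremePoints]
  · exact mem_intLattice_iff.mpr (hPZ w (hPoly.finite_extremePoints.mem_toFinset.mp hw))

lemma sub_le_card_Icc_floor (m : ℤ) (x : ℝ) : x - m ≤ (Icc m ⌊x⌋).card := by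
  have h : ((⌊x⌋ + 1 - m : ℤ) : ℝ) ≤ ((⌊x⌋ + 1 - m).toNat : ℤ) := by
    exact_mod_cast Int.self_le_toNat _
  rw [Int.card_Icc]
  push_cast at h
  linarith [Int.lt_floor_add_one x]

lemma sum_sub_card_le_sum_floor {ι : Type*} (s : Finset ι) (f : ι → ℝ) :
    ∑ i ∈ s, f i - s.card ≤ ∑ i ∈ s, (⌊f i⌋ : ℝ) := by
  have h : ∑ i ∈ s, (f i - 1) ≤ ∑ i ∈ s, (⌊f i⌋ : ℝ) :=
    sum_le_sum fun i _ => (Int.sub_one_lt_floor (f i)).le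
  simpa [sum_sub_distrib] using h

section TransferWeights

variable {E : Type*} [DecidableEq E] (W : Finset E) (n : ℕ) (θ : E → ℝ) (u v : E)

def transferWeights (j : ℤ) (w : E) : ℤ :=
  ⌊n * θ w⌋ + (if w = v then j else 0) + (if w = u then n - ∑ x ∈ W, ⌊n * θ x⌋ - j else 0)

variable {W n θ u v}

lemma sum_transferWeights (hu : u ∈ W) (hv : v ∈ W) (j : ℤ) :
    ∑ w ∈ W, transferWeights W n θ u v j w = n := by
  simp [transferWeights, sum_add_distrib, hu, hv]

lemma transferWeights_nonneg_and_le (hθ₀ : ∀ w ∈ W, 0 ≤ θ w) (hθ : ∑ w ∈ W, θ w = 1)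
    (hvu : v ≠ u) (hle : θ v ≤ θ u) {j : ℤ} (hj : j ∈ Icc (W.card : ℤ) ⌊n * θ v⌋) {w : E}
    (hw : w ∈ W) :
    0 ≤ transferWeights W n θ u v j w ∧ (transferWeights W n θ u v j w : ℝ) ≤ 2 * n * θ w := by
  obtain ⟨hj₁, hj₂⟩ := mem_Icc.mp hj
  have hfloor := sum_sub_card_le_sum_floor W (fun x => n * θ x)
  have hsum : ∑ x ∈ W, n * θ x = n := by rw [← mul_sum, hθ, mul_one]
  have hF : (∑ x ∈ W, ⌊n * θ x⌋ : ℝ) ≤ n :=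
    (sum_le_sum fun x _ => Int.floor_le (n * θ x)).trans hsum.le
  have hj₀ : (0 : ℝ) ≤ j := by exact_mod_cast (Int.natCast_nonneg _).trans hj₁
  have hjv : (j : ℝ) ≤ n * θ v := Int.le_floor.mp hj₂
  have hθw : 0 ≤ (n : ℝ) * θ w := mul_nonneg n.cast_nonneg (hθ₀ w hw)
  have hfw := Int.floor_le (n * θ w)
  have hfw₀ : (0 : ℝ) ≤ ⌊n * θ w⌋ := by exact_mod_cast Int.floor_nonneg.mpr hθw
  suffices h : (0 : ℝ) ≤ transferWeights W n θ u v j w ∧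
      (transferWeights W n θ u v j w : ℝ) ≤ 2 * n * θ w from ⟨by exact_mod_cast h.1, h.2⟩
  unfold transferWeights
  by_cases hwu : w = u
  · subst hwu
    have hju : (j : ℝ) ≤ ⌊n * θ w⌋ := by
      exact_mod_cast Int.le_floor.mpr (hjv.trans (by gcongr))
    have hcard : (W.card : ℝ) ≤ j := by exact_mod_cast hj₁
    simp only [hvu.symm, if_false, if_true]
    push_cast
    constructor <;> linarith
  · by_cases hwv : w = v
    · subst hwv
      simp only [hwu, if_false, if_true]
      push_cast
      constructor <;> linarith
    · simp only [hwu, hwv, if_false]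
      push_cast
      constructor <;> linarith

lemma sum_transferWeights_smul [AddCommGroup E] [Module ℝ E] (hu : u ∈ W) (hv : v ∈ W) (j : ℤ) :
    ∑ w ∈ W, (transferWeights W n θ u v j w : ℝ) • w =
      ∑ w ∈ W, (transferWeights W n θ u v 0 w : ℝ) • w + (j : ℝ) • (v - u) := by
  simp only [transferWeights, Int.cast_add, Int.cast_ite, Int.cast_zero, add_smul, ite_smul,
    zero_smul, sum_add_distrib, sum_ite_eq', hu, hv, if_true]
  push_cast
  module

end TransferWeights

lemma dist_smul_sum_smul_le {E : Type*} [SeminormedAddCommGroup E] [NormedSpace ℝ E]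
    (W : Finset E) {θ : E → ℝ} (hθ₀ : ∀ w ∈ W, 0 ≤ θ w) (hθ : ∑ w ∈ W, θ w = 1) {s : ℝ}
    (hs : 0 ≤ s) (u : E) {B : ℝ} (hB : ∀ w ∈ W, w ≠ u → s * θ w ≤ B) :
    dist (s • ∑ w ∈ W, θ w • w) (s • u) ≤ B * ∑ w ∈ W, ‖w - u‖ := by
  have h : s • ∑ w ∈ W, θ w • w - s • u = ∑ w ∈ W, (s * θ w) • (w - u) := by
    simp only [smul_sub, sum_sub_distrib, ← sum_smul, mul_smul, ← smul_sum, hθ, one_smul]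
  rw [dist_eq_norm, h, mul_sum]
  refine (norm_sum_le _ _).trans (sum_le_sum fun w hw => ?_)
  rw [norm_smul, Real.norm_of_nonneg (mul_nonneg hs (hθ₀ w hw))]
  by_cases hwu : w = u
  · simp [hwu]
  · exact mul_le_mul_of_nonneg_right (hB w hw hwu) (norm_nonneg _)

section LatticeCount

variable {D : ℕ} {W : Finset (Pt D)}

lemma sum_intCast_smul_mem_latticePts_inter (hW : ∀ w ∈ W, w ∈ intLattice D) {n : ℕ}
    (hn : 0 < n) {μ : Pt D → ℝ} (hμ : ∑ w ∈ W, μ w = 2 * n) {c : Pt D → ℤ}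
    (hc : ∑ w ∈ W, c w = n) (hc₀ : ∀ w ∈ W, 0 ≤ c w) (hcμ : ∀ w ∈ W, (c w : ℝ) ≤ μ w) :
    ∑ w ∈ W, (c w : ℝ) • w ∈ latticePts ((n : ℝ) • convexHull ℝ (W : Set (Pt D)) ∩
      ({∑ w ∈ W, μ w • w} - (n : ℝ) • convexHull ℝ (W : Set (Pt D)))) := by
  have hn' : (0 : ℝ) < n := by exact_mod_cast hn
  have hc' : ∑ w ∈ W, (c w : ℝ) = n := by exact_mod_cast hc
  rw [latticePts_eq_inter]
  refine ⟨⟨?_, _, rfl, ∑ w ∈ W, (μ w - c w) • w, ?_, ?_⟩, ?_⟩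
  · exact sum_smul_mem_smul_convexHull W hn' (fun w hw => by exact_mod_cast hc₀ w hw) hc'
  · refine sum_smul_mem_smul_convexHull W hn' (fun w hw => sub_nonneg.mpr (hcμ w hw)) ?_
    rw [sum_sub_distrib, hμ, hc']
    ring
  · simp [sub_smul, sum_sub_distrib]
  · refine Submodule.sum_mem _ fun w hw => ?_
    rw [Int.cast_smul_eq_zsmul]
    exact Submodule.smul_mem _ _ (hW w hw)

lemma mul_sub_card_le_ncard_latticePts_inter (hW : ∀ w ∈ W, w ∈ intLattice D) {n : ℕ}
    (hn : 0 < n) {θ : Pt D → ℝ} (hθ₀ : ∀ w ∈ W, 0 ≤ θ w) (hθ : ∑ w ∈ W, θ w = 1) {u v : Pt D}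
    (hu : u ∈ W) (hv : v ∈ W) (hvu : v ≠ u) (hle : θ v ≤ θ u) :
    n * θ v - W.card ≤ (latticePts ((n : ℝ) • convexHull ℝ (W : Set (Pt D)) ∩
      ({(2 * n : ℝ) • ∑ w ∈ W, θ w • w} - (n : ℝ) • convexHull ℝ (W : Set (Pt D))))).ncard := by
  classical
  set J := Icc (W.card : ℤ) ⌊n * θ v⌋
  set x : ℤ → Pt D := fun j => ∑ w ∈ W, (transferWeights W n θ u v j w : ℝ) • w
  have hmaps : ∀ j ∈ J, x j ∈ latticePts ((n : ℝ) • convexHull ℝ (W : Set (Pt D)) ∩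
      ({(2 * n : ℝ) • ∑ w ∈ W, θ w • w} - (n : ℝ) • convexHull ℝ (W : Set (Pt D)))) := by
    intro j hj
    rw [show (2 * n : ℝ) • ∑ w ∈ W, θ w • w = ∑ w ∈ W, (2 * n * θ w) • w by
      simp only [smul_sum, smul_smul]]
    have hweights w (hw : w ∈ W) := transferWeights_nonneg_and_le hθ₀ hθ hvu hle hj hw
    exact sum_intCast_smul_mem_latticePts_inter hW hn (by rw [← mul_sum, hθ, mul_one])
      (sum_transferWeights hu hv j) (fun w hw => (hweights w hw).1) (fun w hw => (hweights w hw).2)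
  have hinj : Set.InjOn x J := by
    intro j _ j' _ h
    simp only [x] at h
    rw [sum_transferWeights_smul hu hv j, sum_transferWeights_smul hu hv j', add_right_inj] at h
    exact_mod_cast smul_left_injective ℝ (sub_ne_zero.mpr hvu) h
  calc n * θ v - W.card ≤ (J.card : ℝ) := sub_le_card_Icc_floor _ _
    _ = (x '' (J : Set ℤ)).ncard := by rw [hinj.ncard_image, Set.ncard_coe_finset]
    _ ≤ _ := by
      refine Nat.cast_le.mpr (Set.ncard_le_ncard (Set.image_subset_iff.mpr hmaps) ?_)
      exact ((W.finite_toSet.isCompact_convexHull ℝ).isBounded.smul₀ _).subset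
        Set.inter_subset_left |>.latticePts_finite

lemma exists_dist_smul_le_of_ncard_le (hW : ∀ w ∈ W, w ∈ intLattice D) {n : ℕ} (hn : 0 < n)
    {k : Pt D} (hk : k ∈ (2 * n : ℝ) • convexHull ℝ (W : Set (Pt D))) {L : ℝ}
    (hL : (latticePts ((n : ℝ) • convexHull ℝ (W : Set (Pt D)) ∩
      ({k} - (n : ℝ) • convexHull ℝ (W : Set (Pt D))))).ncard ≤ L) :
    ∃ u ∈ W, dist k ((2 * n : ℝ) • u) ≤ 2 * (L + W.card) * ∑ v ∈ W, ∑ w ∈ W, ‖w - v‖ := by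
  obtain ⟨y, hy, rfl⟩ := Set.mem_smul_set.mp hk
  obtain ⟨θ, hθ₀, hθ, rfl⟩ := Finset.mem_convexHull'.mp hy
  obtain ⟨u, hu, hmax⟩ :=
    W.exists_max_image θ (nonempty_of_sum_ne_zero (f := θ) (by rw [hθ]; exact one_ne_zero))
  have hL₀ : 0 ≤ L := le_trans (Nat.cast_nonneg _) hL
  refine ⟨u, hu, (dist_smul_sum_smul_le W hθ₀ hθ (by positivity) u
    (B := 2 * (L + W.card)) fun w hw hwu => ?_).trans ?_⟩
  · have := mul_sub_card_le_ncard_latticePts_inter hW hn hθ₀ hθ hu hw hwu (hmax w hw)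
    linarith
  · exact mul_le_mul_of_nonneg_left
      (single_le_sum (f := fun v => ∑ w ∈ W, ‖w - v‖) (fun _ _ => by positivity) hu)
      (by positivity)

end LatticeCount

lemma exists_pos_forall_mul_le_mul_log {a C m : ℝ} (ha : 0 ≤ a) (hC : 0 ≤ C) (hm : 0 ≤ m) :
    ∃ t > 0, ∀ x : ℝ, 2 ≤ x → 2 * (a * Real.log x + m) * C ≤ t * Real.log x := by
  have hlog2 : 0 < Real.log 2 := Real.log_pos one_lt_two
  refine ⟨2 * C * (a + m / Real.log 2) + 1, by positivity, fun x hx => ?_⟩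
  have hlog : Real.log 2 ≤ Real.log x := Real.log_le_log two_pos hx
  have hm' : m ≤ m / Real.log 2 * Real.log x := by
    rw [div_mul_eq_mul_div, le_div_iff₀ hlog2]
    exact mul_le_mul_of_nonneg_left hlog hm
  nlinarith [Real.log_pos (by linarith : (1 : ℝ) < x)]

/-- For a lattice polytope `P` and a constant `a > 0`, there is `t > 0`
such that for all `n ≥ 2`, every `k ∈ L(nP + nP)` with `|L(nP ∩ (k - nP))| ≤ a log n`
lies within distance `t log n` of some vertex of `nP + nP`. -/
theorem stmt13 {D : ℕ} (P : Set (Pt D)) (hP : IsLatticePolytope P) (a : ℝ) (ha : 0 < a) :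
    ∃ t : ℝ, 0 < t ∧ ∀ n : ℕ, 2 ≤ n →
      ∀ k ∈ latticePts ((n : ℝ) • P + (n : ℝ) • P),
        ((latticePts ((n : ℝ) • P ∩ (({k} : Set (Pt D)) - (n : ℝ) • P))).ncard : ℝ)
            ≤ a * Real.log n →
        ∃ v ∈ Set.extremePoints ℝ ((n : ℝ) • P + (n : ℝ) • P),
          dist k v ≤ t * Real.log n := by
  obtain ⟨W, hW, hPW, hWZ⟩ := hP.exists_finset_extremePoints
  obtain ⟨t, ht, hlog⟩ := exists_pos_forall_mul_le_mul_log (C := ∑ v ∈ W, ∑ w ∈ W, ‖w - v‖) ha.le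
    (sum_nonneg fun _ _ => sum_nonneg fun _ _ => norm_nonneg _) (Nat.cast_nonneg W.card)
  refine ⟨t, ht, fun n hn k hk hcount => ?_⟩
  have h2P : (n : ℝ) • P + (n : ℝ) • P = (2 * n : ℝ) • P := by
    rw [two_mul, (hPW ▸ convex_convexHull ℝ _ : Convex ℝ P).add_smul n.cast_nonneg n.cast_nonneg]
  rw [h2P] at hk ⊢
  rw [hPW] at hk hcount
  obtain ⟨u, hu, hdist⟩ := exists_dist_smul_le_of_ncard_le hWZ (by omega) hk.1 hcount
  refine ⟨(2 * n : ℝ) • u, ?_, ?_⟩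
  · rw [extremePoints_smul _ (by positivity)]
    exact Set.smul_mem_smul_set (hW ▸ hu)
  · exact hdist.trans (hlog n (by exact_mod_cast hn))
end
end
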